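/- arXiv:0802.3877 — 3 statements merged into one kernel-verified Lean document; each statement's English description precedes it below -/
import Mathlib

section
/- For every p ∈ ℝ³, the integral ∫_{ℝ³} dq / ((q·(p−q))² + |q|² + |p−q|² + 1) is finite, and the supremum over all p ∈ ℝ³ of this integral is finite. -/
/-!
Centring at `p / 2`, i.e. writing `q = u + c` with `c = p / 2`, turns the denominator into
`(‖c‖² - ‖u‖²)² + 2‖u‖² + 2‖c‖² + 1`, a radial function of `u`. In polar coordinates the radial
density is bounded via `(a² - r²)² = (a + r)² (r - a)² ≥ r² (r - a)²` by `1 / (1 + (r - ‖c‖)²)`,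
a translated Cauchy density whose integral over `ℝ` is `π` whatever `c` is.
-/

open MeasureTheory Set Metric Real
open scoped ENNReal

namespace MeasureTheory

variable {E : Type*} [NormedAddCommGroup E] [NormedSpace ℝ E] [FiniteDimensional ℝ E]
  [Nontrivial E] [MeasurableSpace E] [BorelSpace E] (μ : Measure E) [μ.IsAddHaarMeasure]

theorem lintegral_fun_norm_addHaar {f : ℝ → ℝ≥0∞} (hf : Measurable f) :
    ∫⁻ x, f ‖x‖ ∂μ = μ.toSphere univ *
      ∫⁻ r in Ioi 0, ENNReal.ofReal (r ^ (Module.finrank ℝ E - 1)) * f r := by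
  have hf_snd : Measurable fun x : sphere (0 : E) 1 × Ioi (0 : ℝ) ↦ f x.2 :=
    (hf.comp measurable_subtype_coe).comp measurable_snd
  have hdensity : Measurable fun r : Ioi (0 : ℝ) ↦
      ENNReal.ofReal ((r : ℝ) ^ (Module.finrank ℝ E - 1)) :=
    (measurable_subtype_coe.pow_const _).ennreal_ofReal
  calc ∫⁻ x, f ‖x‖ ∂μ = ∫⁻ x : ({0}ᶜ : Set E), f ‖(x : E)‖ ∂μ.comap (↑) := by
        rw [lintegral_subtype_comap (measurableSet_singleton _).compl (fun x ↦ f ‖x‖),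
          restrict_compl_singleton]
    _ = ∫⁻ x, f x.2 ∂μ.toSphere.prod (.volumeIoiPow (Module.finrank ℝ E - 1)) := by
        simpa using μ.measurePreserving_homeomorphUnitSphereProd.lintegral_comp hf_snd
    _ = μ.toSphere univ * ∫⁻ r, f r ∂.volumeIoiPow (Module.finrank ℝ E - 1) := by
        rw [lintegral_prod _ hf_snd.aemeasurable]
        simp [lintegral_const, mul_comm]
    _ = _ := by
        congr 1
        exact (lintegral_withDensity_eq_lintegral_mul _ hdensity
          (hf.comp measurable_subtype_coe)).trans (lintegral_subtype_comap measurableSet_Ioi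
            fun r ↦ ENNReal.ofReal (r ^ (Module.finrank ℝ E - 1)) * f r)

end MeasureTheory

theorem lintegral_one_div_one_add_sub_sq (a : ℝ) :
    ∫⁻ x : ℝ, ENNReal.ofReal (1 / (1 + (x - a) ^ 2)) = ENNReal.ofReal π := by
  rw [← lintegral_add_right_eq_self _ a]
  simp only [add_sub_cancel_right, one_div]
  rw [← ofReal_integral_eq_lintegral_ofReal integrable_inv_one_add_sq
    (.of_forall fun x ↦ by positivity), integral_univ_inv_one_add_sq]

theorem sq_div_le_one_div_one_add_sub_sq {a r : ℝ} (ha : 0 ≤ a) (hr : 0 ≤ r) :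
    r ^ 2 / ((a ^ 2 - r ^ 2) ^ 2 + 2 * r ^ 2 + 2 * a ^ 2 + 1) ≤ 1 / (1 + (r - a) ^ 2) := by
  have hfactor : r ^ 2 * (r - a) ^ 2 ≤ (a ^ 2 - r ^ 2) ^ 2 := by
    have : r ^ 2 ≤ (a + r) ^ 2 := by gcongr; linarith
    calc r ^ 2 * (r - a) ^ 2 ≤ (a + r) ^ 2 * (r - a) ^ 2 := by gcongr
      _ = (a ^ 2 - r ^ 2) ^ 2 := by ring
  rw [div_le_div_iff₀ (by positivity) (by positivity)]
  nlinarith [sq_nonneg a, sq_nonneg r]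

theorem inner_sq_add_norm_sq_add_norm_sq {F : Type*} [NormedAddCommGroup F]
    [InnerProductSpace ℝ F] (c u : F) :
    inner ℝ (u + c) (c + c - (u + c)) ^ 2 + ‖u + c‖ ^ 2 + ‖c + c - (u + c)‖ ^ 2 =
      (‖c‖ ^ 2 - ‖u‖ ^ 2) ^ 2 + 2 * ‖u‖ ^ 2 + 2 * ‖c‖ ^ 2 := by
  rw [add_sub_add_right_eq_sub, inner_add_left, inner_sub_right, inner_sub_right,
    real_inner_self_eq_norm_sq, real_inner_self_eq_norm_sq, real_inner_comm u c,
    norm_add_sq_real, norm_sub_sq_real, real_inner_comm u c]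
  ring

theorem setLIntegral_Ioi_radial_le_pi {a : ℝ} (ha : 0 ≤ a) :
    ∫⁻ r in Ioi 0, ENNReal.ofReal (r ^ 2) *
      ENNReal.ofReal (1 / ((a ^ 2 - r ^ 2) ^ 2 + 2 * r ^ 2 + 2 * a ^ 2 + 1)) ≤ ENNReal.ofReal π :=
  calc _ ≤ ∫⁻ r in Ioi 0, ENNReal.ofReal (1 / (1 + (r - a) ^ 2)) := by
        refine setLIntegral_mono' measurableSet_Ioi fun r (hr : 0 < r) ↦ ?_
        rw [← ENNReal.ofReal_mul (sq_nonneg r), mul_one_div]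
        exact ENNReal.ofReal_le_ofReal (sq_div_le_one_div_one_add_sub_sq ha hr.le)
    _ ≤ ∫⁻ r, ENNReal.ofReal (1 / (1 + (r - a) ^ 2)) := setLIntegral_le_lintegral _ _
    _ = ENNReal.ofReal π := lintegral_one_div_one_add_sub_sq a

theorem lintegral_one_div_inner_sq_add_norm_sq_le {E : Type*} [NormedAddCommGroup E]
    [InnerProductSpace ℝ E] [FiniteDimensional ℝ E] (hE : Module.finrank ℝ E = 3)
    [MeasurableSpace E] [BorelSpace E] (μ : Measure E) [μ.IsAddHaarMeasure] (p : E) :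
    ∫⁻ q, ENNReal.ofReal (1 / (inner ℝ q (p - q) ^ 2 + ‖q‖ ^ 2 + ‖p - q‖ ^ 2 + 1)) ∂μ ≤
      μ.toSphere univ * ENNReal.ofReal π := by
  have : Nontrivial E := Module.nontrivial_of_finrank_eq_succ hE
  set c : E := (2 : ℝ)⁻¹ • p
  have hp : c + c = p := by rw [← two_smul ℝ c, smul_inv_smul₀ two_ne_zero]
  set g : ℝ → ℝ≥0∞ := fun r ↦
    ENNReal.ofReal (1 / ((‖c‖ ^ 2 - r ^ 2) ^ 2 + 2 * r ^ 2 + 2 * ‖c‖ ^ 2 + 1))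
  have hg : Measurable g := by fun_prop
  calc _ = ∫⁻ u, g ‖u‖ ∂μ := by
        rw [← lintegral_add_right_eq_self _ c]
        congr with u
        rw [← hp, inner_sq_add_norm_sq_add_norm_sq]
    _ = μ.toSphere univ * ∫⁻ r in Ioi 0, ENNReal.ofReal (r ^ 2) * g r := by
        rw [lintegral_fun_norm_addHaar μ hg, hE]
    _ ≤ μ.toSphere univ * ENNReal.ofReal π := by
        gcongr
        exact setLIntegral_Ioi_radial_le_pi (norm_nonneg c)

/-- For every `p ∈ ℝ³`, the integral
`∫ dq / ((q·(p−q))² + |q|² + |p−q|² + 1)` is finite, and the supremum over `p`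
of these integrals is finite. -/
theorem stmt_0 :
    (∀ p : EuclideanSpace ℝ (Fin 3),
      (∫⁻ q : EuclideanSpace ℝ (Fin 3),
        ENNReal.ofReal
          (1 / ((inner ℝ q (p - q) : ℝ) ^ 2 + ‖q‖ ^ 2 + ‖p - q‖ ^ 2 + 1))) < ⊤) ∧
    ∃ C : ℝ≥0∞, C < ⊤ ∧ ∀ p : EuclideanSpace ℝ (Fin 3),
      (∫⁻ q : EuclideanSpace ℝ (Fin 3),
        ENNReal.ofReal
          (1 / ((inner ℝ q (p - q) : ℝ) ^ 2 + ‖q‖ ^ 2 + ‖p - q‖ ^ 2 + 1))) ≤ C := by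
  set μ : Measure (EuclideanSpace ℝ (Fin 3)) := volume
  have hbound := lintegral_one_div_inner_sq_add_norm_sq_le finrank_euclideanSpace_fin μ
  have hfinite : μ.toSphere univ * ENNReal.ofReal π < ⊤ :=
    ENNReal.mul_lt_top (measure_lt_top _ _) ENNReal.ofReal_lt_top
  exact ⟨fun p ↦ (hbound p).trans_lt hfinite, _, hfinite, hbound⟩
end

section
/- With the cutoff function Θ_k^{(n)}(𝐱) = exp(−(2^n/ℓ^ε) Σ_{i≤k} Σ_{j≠i} h(x_i−x_j)), where h(x) = exp(−√(x²+ℓ²)/ℓ), there is a constant C (depending only on ε and the dimension, not on N, k, n, ℓ) such that for all 𝐱: Σ_{j=1}^N |∇_j Θ_k^{(n)}(𝐱)|² / Θ_k^{(n)}(𝐱) ≤ C ℓ^{−2} Θ_k^{(n−1)}(𝐱). -/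
/-!
Write `Θ_k^{(n)} = exp(-μ S)` with `μ = 2ⁿ/ℓ^ε` and `S = Σ_{i<k} Σ_{j≠i} h(x_i - x_j)`. The chain
rule gives `|∇_j Θ|² / Θ = μ² Θ |∇_j S|²`, and `|∇h| ≤ h/ℓ` bounds `|∇_j S|` by `ℓ⁻¹ W_j`, where
`W_j` is the total weight of the pairs containing `j`. Since `Σ_j W_j² ≤ (Σ_j W_j)² = 4 S²`, the sum
is at most `4 ℓ⁻² (μ S)² Θ`. Finally `Θ^{(n)} = (Θ^{(n-1)})²`, so with `Θ^{(n-1)} = e^{-a}` this is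
`16 ℓ⁻² (a² e^{-a}) e^{-a} ≤ 64 ℓ⁻² Θ^{(n-1)}`.
-/

open Finset

noncomputable section

/-- `h(x) = exp(−√(x²+ℓ²)/ℓ)`. -/
def hcut (ℓ : ℝ) (x : EuclideanSpace ℝ (Fin 3)) : ℝ :=
  Real.exp (-(Real.sqrt (‖x‖ ^ 2 + ℓ ^ 2)) / ℓ)

/-- `Θ_k^{(n)}(𝐱) = exp(−(2^n/ℓ^ε) Σ_{i≤k} Σ_{j≠i} h(x_i−x_j))`. -/
def ThetaCut (N : ℕ) (ℓ ε : ℝ) (k n : ℕ) (x : Fin N → EuclideanSpace ℝ (Fin 3)) : ℝ :=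
  Real.exp (-((2 : ℝ) ^ n / ℓ ^ ε) *
    ∑ i ∈ univ.filter (fun i : Fin N => (i : ℕ) < k),
      ∑ j ∈ univ.filter (fun j : Fin N => j ≠ i), hcut ℓ (x i - x j))

/-- The square of the norm of the gradient of `Θ_k^{(n)}` with respect to the
variable `x_j`. -/
def gradSq (N : ℕ) (ℓ ε : ℝ) (k n : ℕ) (j : Fin N)
    (x : Fin N → EuclideanSpace ℝ (Fin 3)) : ℝ :=
  ∑ α : Fin 3,
    (fderiv ℝ (ThetaCut N ℓ ε k n) x (Pi.single j (EuclideanSpace.single α (1 : ℝ)))) ^ 2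

theorem sq_mul_exp_neg_le_four {a : ℝ} (ha : 0 ≤ a) : a ^ 2 * Real.exp (-a) ≤ 4 := by
  have hlin : a ≤ 2 * Real.exp (a / 2) := by linarith [Real.add_one_le_exp (a / 2)]
  have hsq : a ^ 2 ≤ 4 * Real.exp a := calc
    a ^ 2 ≤ (2 * Real.exp (a / 2)) ^ 2 := pow_le_pow_left₀ ha hlin 2
    _ = 4 * Real.exp a := by rw [mul_pow, sq (Real.exp _), ← Real.exp_add]; norm_num
  rwa [Real.exp_neg, ← div_eq_mul_inv, div_le_iff₀ (Real.exp_pos a)]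

theorem EuclideanSpace.sum_sq_apply_single {ι : Type*} [Fintype ι] [DecidableEq ι]
    (L : EuclideanSpace ℝ ι →L[ℝ] ℝ) :
    ∑ α, L (EuclideanSpace.single α 1) ^ 2 = ‖L‖ ^ 2 := by
  set u := (InnerProductSpace.toDual ℝ _).symm L
  have hu : ∀ α, L (EuclideanSpace.single α 1) = u α := fun α => by
    rw [← InnerProductSpace.toDual_symm_apply, EuclideanSpace.inner_single_right]; simp [u]
  rw [← (InnerProductSpace.toDual ℝ _).symm.norm_map L, EuclideanSpace.norm_sq_eq]
  simp [hu, u]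

theorem norm_pi_single_apply {ι F : Type*} [DecidableEq ι] [SeminormedAddCommGroup F]
    (m i : ι) (v : F) : ‖(Pi.single m v : ι → F) i‖ = (if i = m then 1 else 0) * ‖v‖ := by
  rw [Pi.single_apply]
  split_ifs <;> simp

section SqrtNormSq

variable {E : Type*} [NormedAddCommGroup E] [InnerProductSpace ℝ E]

theorem hasFDerivAt_sqrt_norm_sq_add_sq {a : ℝ} (ha : a ≠ 0) (y : E) :
    HasFDerivAt (fun y : E => √(‖y‖ ^ 2 + a ^ 2)) ((√(‖y‖ ^ 2 + a ^ 2))⁻¹ • innerSL ℝ y) y := by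
  have hpos : 0 < ‖y‖ ^ 2 + a ^ 2 := by positivity
  convert ((hasStrictFDerivAt_norm_sq y).hasFDerivAt.add_const (a ^ 2)).sqrt hpos.ne' using 1
  rw [two_smul, ← two_smul ℝ, smul_smul]
  congr 1
  field_simp

theorem norm_inv_sqrt_smul_innerSL_le (a : ℝ) (y : E) :
    ‖(√(‖y‖ ^ 2 + a ^ 2))⁻¹ • innerSL ℝ y‖ ≤ 1 := by
  rw [norm_smul, innerSL_apply_norm, norm_inv, Real.norm_of_nonneg (Real.sqrt_nonneg _)]
  refine inv_mul_le_one_of_le₀ ?_ (Real.sqrt_nonneg _)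
  exact Real.le_sqrt_of_sq_le (le_add_of_nonneg_right (sq_nonneg a))

end SqrtNormSq

theorem hcut_pos (ℓ : ℝ) (y : EuclideanSpace ℝ (Fin 3)) : 0 < hcut ℓ y := Real.exp_pos _

theorem hasFDerivAt_hcut {ℓ : ℝ} (hℓ : ℓ ≠ 0) (y : EuclideanSpace ℝ (Fin 3)) :
    HasFDerivAt (hcut ℓ)
      (hcut ℓ y • ℓ⁻¹ • -((√(‖y‖ ^ 2 + ℓ ^ 2))⁻¹ • innerSL ℝ y)) y := by
  have hfun : hcut ℓ = fun y => Real.exp (-√(‖y‖ ^ 2 + ℓ ^ 2) * ℓ⁻¹) := by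
    funext z; rw [hcut, div_eq_mul_inv]
  rw [hfun]
  exact ((hasFDerivAt_sqrt_norm_sq_add_sq hℓ y).neg.mul_const ℓ⁻¹).exp

theorem differentiable_hcut {ℓ : ℝ} (hℓ : ℓ ≠ 0) : Differentiable ℝ (hcut ℓ) := fun y =>
  (hasFDerivAt_hcut hℓ y).differentiableAt

theorem norm_fderiv_hcut_le {ℓ : ℝ} (hℓ : 0 < ℓ) (y : EuclideanSpace ℝ (Fin 3)) :
    ‖fderiv ℝ (hcut ℓ) y‖ ≤ hcut ℓ y / ℓ := by
  rw [(hasFDerivAt_hcut hℓ.ne' y).fderiv, norm_smul, norm_smul, norm_neg, norm_inv,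
    Real.norm_of_nonneg (hcut_pos ℓ y).le, Real.norm_of_nonneg hℓ.le, div_eq_mul_inv]
  exact mul_le_mul_of_nonneg_left
    (mul_le_of_le_one_right (inv_nonneg.2 hℓ.le) (norm_inv_sqrt_smul_innerSL_le ℓ y))
    (hcut_pos ℓ y).le

section Pairs

variable {N : ℕ} {ℓ : ℝ} {k : ℕ}

def pairSum (N : ℕ) (ℓ : ℝ) (k : ℕ) (x : Fin N → EuclideanSpace ℝ (Fin 3)) : ℝ :=
  ∑ i ∈ univ.filter (fun i : Fin N => (i : ℕ) < k),
    ∑ j ∈ univ.filter (fun j : Fin N => j ≠ i), hcut ℓ (x i - x j)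

def pairWeight (N : ℕ) (ℓ : ℝ) (k : ℕ) (x : Fin N → EuclideanSpace ℝ (Fin 3)) (m : Fin N) : ℝ :=
  ∑ i ∈ univ.filter (fun i : Fin N => (i : ℕ) < k),
    ∑ j ∈ univ.filter (fun j : Fin N => j ≠ i),
      hcut ℓ (x i - x j) * ((if i = m then 1 else 0) + (if j = m then 1 else 0))

theorem pairSum_nonneg (x : Fin N → EuclideanSpace ℝ (Fin 3)) : 0 ≤ pairSum N ℓ k x :=
  sum_nonneg fun _ _ => sum_nonneg fun _ _ => (hcut_pos _ _).le

theorem pairWeight_nonneg (x : Fin N → EuclideanSpace ℝ (Fin 3)) (m : Fin N) :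
    0 ≤ pairWeight N ℓ k x m :=
  sum_nonneg fun _ _ => sum_nonneg fun _ _ =>
    mul_nonneg (hcut_pos _ _).le
      (add_nonneg (by split_ifs <;> norm_num) (by split_ifs <;> norm_num))

theorem sum_pairWeight (x : Fin N → EuclideanSpace ℝ (Fin 3)) :
    ∑ m, pairWeight N ℓ k x m = 2 * pairSum N ℓ k x := by
  simp only [pairWeight, pairSum, mul_sum]
  rw [sum_comm]
  refine sum_congr rfl fun i _ => ?_
  rw [sum_comm]
  refine sum_congr rfl fun j _ => ?_
  rw [← mul_sum, sum_add_distrib, sum_ite_eq, sum_ite_eq]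
  simp only [mem_univ, if_true]
  ring

theorem sum_sq_pairWeight_le (x : Fin N → EuclideanSpace ℝ (Fin 3)) :
    ∑ m, pairWeight N ℓ k x m ^ 2 ≤ (2 * pairSum N ℓ k x) ^ 2 :=
  sum_pairWeight (ℓ := ℓ) (k := k) x ▸
    sum_sq_le_sq_sum_of_nonneg fun m _ => pairWeight_nonneg x m

theorem differentiable_pairSum (hℓ : ℓ ≠ 0) : Differentiable ℝ (pairSum N ℓ k) := fun _ =>
  DifferentiableAt.fun_sum fun _ _ => DifferentiableAt.fun_sum fun _ _ =>
    (differentiable_hcut hℓ _).comp _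
      ((differentiableAt_apply _ _).sub (differentiableAt_apply _ _))

theorem fderiv_pairSum_apply (hℓ : ℓ ≠ 0) (x w : Fin N → EuclideanSpace ℝ (Fin 3)) :
    fderiv ℝ (pairSum N ℓ k) x w =
      ∑ i ∈ univ.filter (fun i : Fin N => (i : ℕ) < k),
        ∑ j ∈ univ.filter (fun j : Fin N => j ≠ i), fderiv ℝ (hcut ℓ) (x i - x j) (w i - w j) := by
  have h : HasFDerivAt (pairSum N ℓ k)
      (∑ i ∈ univ.filter (fun i : Fin N => (i : ℕ) < k),
        ∑ j ∈ univ.filter (fun j : Fin N => j ≠ i),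
          (fderiv ℝ (hcut ℓ) (x i - x j)).comp
            (ContinuousLinearMap.proj (R := ℝ) (φ := fun _ : Fin N => EuclideanSpace ℝ (Fin 3)) i -
              ContinuousLinearMap.proj j)) x :=
    HasFDerivAt.fun_sum fun i _ => HasFDerivAt.fun_sum fun j _ =>
      (differentiable_hcut hℓ _).hasFDerivAt.comp x
        ((hasFDerivAt_apply i x).sub (hasFDerivAt_apply j x))
  simp [h.fderiv]

theorem norm_fderiv_pairSum_comp_single_le (hℓ : 0 < ℓ) (x : Fin N → EuclideanSpace ℝ (Fin 3))
    (m : Fin N) :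
    ‖(fderiv ℝ (pairSum N ℓ k) x).comp
      (ContinuousLinearMap.single ℝ (fun _ => EuclideanSpace ℝ (Fin 3)) m)‖ ≤
      pairWeight N ℓ k x m / ℓ := by
  refine ContinuousLinearMap.opNorm_le_bound _
    (div_nonneg (pairWeight_nonneg x m) hℓ.le) fun v => ?_
  set w : Fin N → EuclideanSpace ℝ (Fin 3) := Pi.single m v
  have hterm : ∀ i j, ‖fderiv ℝ (hcut ℓ) (x i - x j) (w i - w j)‖ ≤
      hcut ℓ (x i - x j) * ((if i = m then 1 else 0) + (if j = m then 1 else 0)) / ℓ * ‖v‖ :=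
    fun i j => calc
      _ ≤ ‖fderiv ℝ (hcut ℓ) (x i - x j)‖ * (‖w i‖ + ‖w j‖) :=
        (ContinuousLinearMap.le_opNorm _ _).trans (by gcongr; exact norm_sub_le _ _)
      _ ≤ hcut ℓ (x i - x j) / ℓ * (‖w i‖ + ‖w j‖) := by
        gcongr; exact norm_fderiv_hcut_le hℓ _
      _ = _ := by rw [norm_pi_single_apply, norm_pi_single_apply]; ring
  rw [ContinuousLinearMap.comp_apply, ContinuousLinearMap.single_apply,
    fderiv_pairSum_apply hℓ.ne']
  calc _ ≤ _ := norm_sum_le _ _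
    _ ≤ _ := sum_le_sum fun i _ => (norm_sum_le _ _).trans (sum_le_sum fun j _ => hterm i j)
    _ = pairWeight N ℓ k x m / ℓ * ‖v‖ := by simp only [pairWeight, sum_div, sum_mul]

theorem thetaCut_eq_exp_pairSum (ε : ℝ) (n : ℕ) (x : Fin N → EuclideanSpace ℝ (Fin 3)) :
    ThetaCut N ℓ ε k n x = Real.exp (-((2 : ℝ) ^ n / ℓ ^ ε) * pairSum N ℓ k x) :=
  rfl

theorem thetaCut_succ (ε : ℝ) (n : ℕ) (x : Fin N → EuclideanSpace ℝ (Fin 3)) :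
    ThetaCut N ℓ ε k (n + 1) x = ThetaCut N ℓ ε k n x ^ 2 := by
  rw [thetaCut_eq_exp_pairSum, thetaCut_eq_exp_pairSum, sq, ← Real.exp_add, pow_succ]
  ring_nf

theorem gradSq_eq (hℓ : ℓ ≠ 0) (ε : ℝ) (n : ℕ) (m : Fin N) (x : Fin N → EuclideanSpace ℝ (Fin 3)) :
    gradSq N ℓ ε k n m x = ((2 : ℝ) ^ n / ℓ ^ ε * ThetaCut N ℓ ε k n x) ^ 2 *
      ‖(fderiv ℝ (pairSum N ℓ k) x).comp
        (ContinuousLinearMap.single ℝ (fun _ => EuclideanSpace ℝ (Fin 3)) m)‖ ^ 2 := by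
  have hΘ : HasFDerivAt (ThetaCut N ℓ ε k n)
      (ThetaCut N ℓ ε k n x • (-((2 : ℝ) ^ n / ℓ ^ ε)) • fderiv ℝ (pairSum N ℓ k) x) x :=
    ((differentiable_pairSum hℓ x).hasFDerivAt.const_mul _).exp
  rw [gradSq, ← EuclideanSpace.sum_sq_apply_single, mul_sum]
  refine sum_congr rfl fun α _ => ?_
  simp only [hΘ.fderiv, _root_.smul_apply, ContinuousLinearMap.comp_apply,
    ContinuousLinearMap.single_apply, smul_eq_mul]
  ring

theorem sum_gradSq_div_thetaCut_le (hℓ : 0 < ℓ) (ε : ℝ) (n : ℕ)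
    (x : Fin N → EuclideanSpace ℝ (Fin 3)) :
    ∑ m, gradSq N ℓ ε k n m x / ThetaCut N ℓ ε k n x ≤
      4 * ((2 : ℝ) ^ n / ℓ ^ ε * pairSum N ℓ k x) ^ 2 * ThetaCut N ℓ ε k n x / ℓ ^ 2 := by
  set μ := (2 : ℝ) ^ n / ℓ ^ ε
  set Θ := ThetaCut N ℓ ε k n x
  have hΘ : 0 < Θ := Real.exp_pos _
  calc ∑ m, gradSq N ℓ ε k n m x / Θ
      = ∑ m, (μ * Θ) ^ 2 * ‖(fderiv ℝ (pairSum N ℓ k) x).comp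
          (ContinuousLinearMap.single ℝ (fun _ => EuclideanSpace ℝ (Fin 3)) m)‖ ^ 2 / Θ :=
        sum_congr rfl fun m _ => by rw [gradSq_eq hℓ.ne']
    _ = μ ^ 2 * Θ * ∑ m, ‖(fderiv ℝ (pairSum N ℓ k) x).comp
          (ContinuousLinearMap.single ℝ (fun _ => EuclideanSpace ℝ (Fin 3)) m)‖ ^ 2 := by
        rw [mul_sum]
        refine sum_congr rfl fun m _ => ?_
        field_simp
    _ ≤ μ ^ 2 * Θ * ∑ m, (pairWeight N ℓ k x m / ℓ) ^ 2 := by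
        gcongr with m
        exact norm_fderiv_pairSum_comp_single_le hℓ x m
    _ = μ ^ 2 * Θ / ℓ ^ 2 * ∑ m, pairWeight N ℓ k x m ^ 2 := by
        simp only [div_pow, ← sum_div]; ring
    _ ≤ μ ^ 2 * Θ / ℓ ^ 2 * (2 * pairSum N ℓ k x) ^ 2 := by
        gcongr; exact sum_sq_pairWeight_le x
    _ = 4 * (μ * pairSum N ℓ k x) ^ 2 * Θ / ℓ ^ 2 := by ring

end Pairs

theorem stmt_7_general (ε : ℝ) :
    ∃ C : ℝ, 0 < C ∧
      ∀ (N : ℕ) (ℓ : ℝ), 0 < ℓ → ℓ ≤ 1 →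
      ∀ k n : ℕ, 1 ≤ n → k ≤ N →
      ∀ x : Fin N → EuclideanSpace ℝ (Fin 3),
        (∑ j : Fin N, gradSq N ℓ ε k n j x / ThetaCut N ℓ ε k n x) ≤
          C * ℓ ^ (-(2 : ℝ)) * ThetaCut N ℓ ε k (n - 1) x := by
  refine ⟨64, by norm_num, ?_⟩
  rintro N ℓ hℓ - k n hn - x
  obtain ⟨n, rfl⟩ := Nat.exists_eq_add_of_le' hn
  set a := (2 : ℝ) ^ n / ℓ ^ ε * pairSum N ℓ k x
  have ha : 0 ≤ a := mul_nonneg (by positivity) (pairSum_nonneg x)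
  have hΘ : ThetaCut N ℓ ε k n x = Real.exp (-a) := by rw [thetaCut_eq_exp_pairSum, neg_mul]
  have hμS : (2 : ℝ) ^ (n + 1) / ℓ ^ ε * pairSum N ℓ k x = 2 * a := by rw [pow_succ]; ring
  calc _ ≤ 4 * ((2 : ℝ) ^ (n + 1) / ℓ ^ ε * pairSum N ℓ k x) ^ 2 *
        ThetaCut N ℓ ε k (n + 1) x / ℓ ^ 2 := sum_gradSq_div_thetaCut_le hℓ ε (n + 1) x
    _ = 16 * (a ^ 2 * Real.exp (-a)) * Real.exp (-a) / ℓ ^ 2 := by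
        rw [hμS, thetaCut_succ, hΘ]; ring
    _ ≤ 16 * 4 * Real.exp (-a) / ℓ ^ 2 := by gcongr; exact sq_mul_exp_neg_le_four ha
    _ = 64 * ℓ ^ (-(2 : ℝ)) * ThetaCut N ℓ ε k (n + 1 - 1) x := by
        rw [Nat.add_sub_cancel, hΘ, Real.rpow_neg hℓ.le, Real.rpow_two]; ring

/-- `Σ_{j=1}^N |∇_j Θ_k^{(n)}|² / Θ_k^{(n)} ≤ C ℓ^{−2} Θ_k^{(n−1)}`, where the constant
depends only on `ε` (not on `N`, `k`, `n`, `ℓ`). -/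
theorem stmt_7 (ε : ℝ) (hε : 0 < ε) (hε1 : ε ≤ 1) :
    ∃ C : ℝ, 0 < C ∧
      ∀ (N : ℕ) (ℓ : ℝ), 0 < ℓ → ℓ ≤ 1 →
      ∀ k n : ℕ, 1 ≤ n → k ≤ N →
      ∀ x : Fin N → EuclideanSpace ℝ (Fin 3),
        (∑ j : Fin N, gradSq N ℓ ε k n j x / ThetaCut N ℓ ε k n x) ≤
          C * ℓ ^ (-(2 : ℝ)) * ThetaCut N ℓ ε k (n - 1) x :=
  stmt_7_general ε

end
end

section
/- For every p ∈ ℝ³, ∫_{ℝ³} (|q|^{1/2} + 1)/((1+|q|²)(1+|q−p|²)) dq is finite, and the supremum over p ∈ ℝ³ of this integral is finite. -/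
open MeasureTheory Real
open scoped ENNReal

lemma ptwise (r s : ℝ) (hr : 0 ≤ r) (hs : 0 ≤ s) :
    (r ^ ((1:ℝ)/2) + 1) / ((1 + r ^ 2) * (1 + s ^ 2)) ≤
      8 * ((1 + r) ^ (-(7/2) : ℝ) + (1 + s) ^ (-(7/2) : ℝ)) := by
  set a := 1 + r with ha'
  set b := 1 + s with hb'
  have ha : (1:ℝ) ≤ a := by simp [ha']; linarith
  have hb : (1:ℝ) ≤ b := by simp [hb']; linarith
  have ha0 : (0:ℝ) < a := by linarith
  have hb0 : (0:ℝ) < b := by linarith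
  have hN : r ^ ((1:ℝ)/2) + 1 ≤ 2 * a ^ ((1:ℝ)/2) := by
    have h1 : r ^ ((1:ℝ)/2) ≤ a ^ ((1:ℝ)/2) :=
      Real.rpow_le_rpow hr (by linarith) (by norm_num)
    have h2 : (1:ℝ) ≤ a ^ ((1:ℝ)/2) := Real.one_le_rpow ha (by norm_num)
    linarith
  have hA : a ^ 2 ≤ 2 * (1 + r ^ 2) := by nlinarith [sq_nonneg (1 - r)]
  have hB : b ^ 2 ≤ 2 * (1 + s ^ 2) := by nlinarith [sq_nonneg (1 - s)]
  have hNpos : 0 ≤ r ^ ((1:ℝ)/2) + 1 := by positivity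
  have hABpos : (0:ℝ) < (1 + r ^ 2) * (1 + s ^ 2) := by positivity
  have hfin : 2 * (a ^ 2 * b ^ 2) ≤ 8 * ((1 + r ^ 2) * (1 + s ^ 2)) := by
    calc 2 * (a ^ 2 * b ^ 2) ≤ 2 * ((2 * (1 + r ^ 2)) * (2 * (1 + s ^ 2))) := by
          gcongr
      _ = 8 * ((1 + r ^ 2) * (1 + s ^ 2)) := by ring
  rw [div_le_iff₀ hABpos]
  rcases le_total a b with hab | hab
  · have key : (r ^ ((1:ℝ)/2) + 1) ≤ 8 * a ^ (-(7/2) : ℝ) * ((1 + r ^ 2) * (1 + s ^ 2)) := by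
      have hmul : a ^ ((1:ℝ)/2) * a ^ ((7/2) : ℝ) = a ^ 4 := by
        rw [← Real.rpow_add ha0, show ((1:ℝ)/2 + 7/2) = ((4:ℕ):ℝ) by norm_num,
          Real.rpow_natCast]
      have h1 : (r ^ ((1:ℝ)/2) + 1) * a ^ ((7/2) : ℝ) ≤ 2 * a ^ 4 := by
        have := mul_le_mul_of_nonneg_right hN (Real.rpow_nonneg ha0.le ((7:ℝ)/2))
        calc (r ^ ((1:ℝ)/2) + 1) * a ^ ((7/2) : ℝ)
            ≤ 2 * a ^ ((1:ℝ)/2) * a ^ ((7/2) : ℝ) := this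
          _ = 2 * (a ^ ((1:ℝ)/2) * a ^ ((7/2) : ℝ)) := by ring
          _ = 2 * a ^ 4 := by rw [hmul]
      have h2 : 2 * a ^ 4 ≤ 2 * (a ^ 2 * b ^ 2) := by
        have : a ^ 2 ≤ b ^ 2 := by nlinarith
        nlinarith [sq_nonneg a]
      have hpow : a ^ (-(7/2) : ℝ) = (a ^ ((7/2):ℝ))⁻¹ := by
        rw [← Real.rpow_neg ha0.le]
      have hppos : (0:ℝ) < a ^ ((7/2):ℝ) := Real.rpow_pos_of_pos ha0 _
      rw [hpow, show 8 * (a ^ ((7/2):ℝ))⁻¹ * ((1 + r ^ 2) * (1 + s ^ 2))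
          = 8 * ((1 + r ^ 2) * (1 + s ^ 2)) / a ^ ((7/2):ℝ) by ring, le_div_iff₀ hppos]
      exact le_trans h1 (le_trans h2 hfin)
    have hnn : (0:ℝ) ≤ b ^ (-(7/2) : ℝ) := Real.rpow_nonneg hb0.le _
    nlinarith [key]
  · have key : (r ^ ((1:ℝ)/2) + 1) ≤ 8 * b ^ (-(7/2) : ℝ) * ((1 + r ^ 2) * (1 + s ^ 2)) := by
      have ha12 : (0:ℝ) ≤ a ^ ((1:ℝ)/2) := Real.rpow_nonneg ha0.le _
      have h1 : (r ^ ((1:ℝ)/2) + 1) * b ^ ((7/2) : ℝ) ≤ 2 * a ^ ((1:ℝ)/2) * b ^ ((7/2):ℝ) :=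
        mul_le_mul_of_nonneg_right hN (Real.rpow_nonneg hb0.le _)
      have h2 : b ^ ((7/2) : ℝ) ≤ a ^ ((3/2):ℝ) * b ^ 2 := by
        have hb32 : b ^ ((3/2):ℝ) ≤ a ^ ((3/2):ℝ) :=
          Real.rpow_le_rpow hb0.le hab (by norm_num)
        have hsplit : b ^ ((7/2):ℝ) = b ^ ((3/2):ℝ) * b ^ 2 := by
          rw [show (b:ℝ) ^ 2 = b ^ ((2:ℕ):ℝ) by rw [Real.rpow_natCast],
            ← Real.rpow_add hb0]
          norm_num
        rw [hsplit]
        exact mul_le_mul_of_nonneg_right hb32 (sq_nonneg b)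
      have h3 : a ^ ((1:ℝ)/2) * a ^ ((3/2):ℝ) = a ^ 2 := by
        rw [← Real.rpow_add ha0, show ((1:ℝ)/2 + 3/2) = ((2:ℕ):ℝ) by norm_num,
          Real.rpow_natCast]
      have h4 : 2 * a ^ ((1:ℝ)/2) * b ^ ((7/2):ℝ) ≤ 2 * (a ^ 2 * b ^ 2) := by
        calc 2 * a ^ ((1:ℝ)/2) * b ^ ((7/2):ℝ)
            ≤ 2 * a ^ ((1:ℝ)/2) * (a ^ ((3/2):ℝ) * b ^ 2) := by
              exact mul_le_mul_of_nonneg_left h2 (by positivity)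
          _ = 2 * (a ^ ((1:ℝ)/2) * a ^ ((3/2):ℝ)) * b ^ 2 := by ring
          _ = 2 * (a ^ 2 * b ^ 2) := by rw [h3]; ring
      have hpow : b ^ (-(7/2) : ℝ) = (b ^ ((7/2):ℝ))⁻¹ := by
        rw [← Real.rpow_neg hb0.le]
      have hppos : (0:ℝ) < b ^ ((7/2):ℝ) := Real.rpow_pos_of_pos hb0 _
      rw [hpow, show 8 * (b ^ ((7/2):ℝ))⁻¹ * ((1 + r ^ 2) * (1 + s ^ 2))
          = 8 * ((1 + r ^ 2) * (1 + s ^ 2)) / b ^ ((7/2):ℝ) by ring, le_div_iff₀ hppos]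
      exact le_trans h1 (le_trans h4 hfin)
    have hnn : (0:ℝ) ≤ a ^ (-(7/2) : ℝ) := Real.rpow_nonneg ha0.le _
    nlinarith [key]

lemma bound_lemma (p : EuclideanSpace ℝ (Fin 3)) :
    (∫⁻ q : EuclideanSpace ℝ (Fin 3),
        ENNReal.ofReal
          ((‖q‖ ^ ((1 : ℝ)/2) + 1) / ((1 + ‖q‖ ^ 2) * (1 + ‖q - p‖ ^ 2)))) ≤
      ENNReal.ofReal 8 *
        ((∫⁻ x : EuclideanSpace ℝ (Fin 3), ENNReal.ofReal ((1 + ‖x‖) ^ (-(7/2) : ℝ))) +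
         (∫⁻ x : EuclideanSpace ℝ (Fin 3), ENNReal.ofReal ((1 + ‖x‖) ^ (-(7/2) : ℝ)))) := by
  have hmeas : Measurable fun x : EuclideanSpace ℝ (Fin 3) =>
      ENNReal.ofReal ((1 + ‖x‖) ^ (-(7/2) : ℝ)) := by fun_prop
  calc (∫⁻ q : EuclideanSpace ℝ (Fin 3),
        ENNReal.ofReal
          ((‖q‖ ^ ((1 : ℝ)/2) + 1) / ((1 + ‖q‖ ^ 2) * (1 + ‖q - p‖ ^ 2))))
      ≤ ∫⁻ q : EuclideanSpace ℝ (Fin 3),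
          ENNReal.ofReal 8 * (ENNReal.ofReal ((1 + ‖q‖) ^ (-(7/2) : ℝ)) +
            ENNReal.ofReal ((1 + ‖q - p‖) ^ (-(7/2) : ℝ))) := by
        refine lintegral_mono fun q => ?_
        have h := ptwise ‖q‖ ‖q - p‖ (norm_nonneg _) (norm_nonneg _)
        calc ENNReal.ofReal
              ((‖q‖ ^ ((1 : ℝ)/2) + 1) / ((1 + ‖q‖ ^ 2) * (1 + ‖q - p‖ ^ 2)))
            ≤ ENNReal.ofReal (8 * ((1 + ‖q‖) ^ (-(7/2) : ℝ) + (1 + ‖q - p‖) ^ (-(7/2) : ℝ))) :=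
              ENNReal.ofReal_le_ofReal h
          _ = ENNReal.ofReal 8 * (ENNReal.ofReal ((1 + ‖q‖) ^ (-(7/2) : ℝ)) +
              ENNReal.ofReal ((1 + ‖q - p‖) ^ (-(7/2) : ℝ))) := by
            rw [ENNReal.ofReal_mul (by norm_num),
              ENNReal.ofReal_add (by positivity) (by positivity)]
    _ = ENNReal.ofReal 8 * ∫⁻ q : EuclideanSpace ℝ (Fin 3),
          (ENNReal.ofReal ((1 + ‖q‖) ^ (-(7/2) : ℝ)) +
            ENNReal.ofReal ((1 + ‖q - p‖) ^ (-(7/2) : ℝ))) := by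
        rw [lintegral_const_mul _ (by fun_prop)]
    _ = ENNReal.ofReal 8 *
        ((∫⁻ x : EuclideanSpace ℝ (Fin 3), ENNReal.ofReal ((1 + ‖x‖) ^ (-(7/2) : ℝ))) +
         (∫⁻ x : EuclideanSpace ℝ (Fin 3), ENNReal.ofReal ((1 + ‖x‖) ^ (-(7/2) : ℝ)))) := by
        rw [lintegral_add_left hmeas]
        congr 1
        congr 1
        exact lintegral_sub_right_eq_self
          (fun x : EuclideanSpace ℝ (Fin 3) => ENNReal.ofReal ((1 + ‖x‖) ^ (-(7/2) : ℝ))) p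

/-- For every `p ∈ ℝ³`, `∫ (|q|^{1/2} + 1)/((1+|q|²)(1+|q−p|²)) dq` is finite,
and the supremum over `p` of these integrals is finite. -/
theorem stmt_13 :
    (∀ p : EuclideanSpace ℝ (Fin 3),
      (∫⁻ q : EuclideanSpace ℝ (Fin 3),
        ENNReal.ofReal
          ((‖q‖ ^ ((1 : ℝ)/2) + 1) / ((1 + ‖q‖ ^ 2) * (1 + ‖q - p‖ ^ 2)))) < ⊤) ∧
    ∃ C : ℝ≥0∞, C < ⊤ ∧ ∀ p : EuclideanSpace ℝ (Fin 3),
      (∫⁻ q : EuclideanSpace ℝ (Fin 3),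
        ENNReal.ofReal
          ((‖q‖ ^ ((1 : ℝ)/2) + 1) / ((1 + ‖q‖ ^ 2) * (1 + ‖q - p‖ ^ 2)))) ≤ C := by
  have hI : (∫⁻ x : EuclideanSpace ℝ (Fin 3), ENNReal.ofReal ((1 + ‖x‖) ^ (-(7/2) : ℝ))) < ⊤ := by
    apply finite_integral_one_add_norm
    rw [finrank_euclideanSpace]
    norm_num
  have hC : ENNReal.ofReal 8 *
      ((∫⁻ x : EuclideanSpace ℝ (Fin 3), ENNReal.ofReal ((1 + ‖x‖) ^ (-(7/2) : ℝ))) +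
       (∫⁻ x : EuclideanSpace ℝ (Fin 3), ENNReal.ofReal ((1 + ‖x‖) ^ (-(7/2) : ℝ)))) < ⊤ :=
    ENNReal.mul_lt_top ENNReal.ofReal_lt_top (ENNReal.add_lt_top.mpr ⟨hI, hI⟩)
  exact ⟨fun p => lt_of_le_of_lt (bound_lemma p) hC, _, hC, bound_lemma⟩
end
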